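/- The group presented by ⟨a,b,c ∣ [b⁻¹,c] = 1, aca⁻¹b³c⁻² = 1, ab⁻¹a⁻¹bc⁻¹ = 1⟩ is isomorphic to the semidirect product ℤ ⋉_A ℤ² where A = [[1,1],[3,2]]. -/

import Mathlib

/-
In the presented group `G`, the first relator says that `b` and `c` commute, so `x = b * c` and
`y = b⁻¹` span a quotient of `ℤ²`; the other two relators say that conjugation by `a` sends
`x ↦ x * y ^ 3` and `y ↦ x * y ^ 2`, i.e. acts through `A`. This gives a homomorphism
`ℤ ⋉_A ℤ² → G` with `t ↦ a`, `e₁ ↦ x`, `e₂ ↦ y`. Conversely `a ↦ t`, `b ↦ -e₂`,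
`c ↦ e₁ + e₂` kills the relators, and the two homomorphisms are inverse to each other on generators.
-/

open Matrix

/-- The additive automorphism of `ℤ²` induced by a matrix in `GL(2,ℤ)`. -/
def glAddEquiv (A : GL (Fin 2) ℤ) : (Fin 2 → ℤ) ≃+ (Fin 2 → ℤ) where
  toFun v := Matrix.mulVec (A : Matrix (Fin 2) (Fin 2) ℤ) v
  invFun v := Matrix.mulVec ((A⁻¹ : GL (Fin 2) ℤ) : Matrix (Fin 2) (Fin 2) ℤ) v
  left_inv v := by
    show Matrix.mulVec _ (Matrix.mulVec _ v) = v
    rw [Matrix.mulVec_mulVec, ← Matrix.GeneralLinearGroup.coe_mul, inv_mul_cancel]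
    simp
  right_inv v := by
    show Matrix.mulVec _ (Matrix.mulVec _ v) = v
    rw [Matrix.mulVec_mulVec, ← Matrix.GeneralLinearGroup.coe_mul, mul_inv_cancel]
    simp
  map_add' x y := by
    show Matrix.mulVec _ (x+y) = _
    rw [Matrix.mulVec_add]

/-- The action of `ℤ` on `ℤ²` where `1` acts by the matrix `A`. -/
def glZAction (A : GL (Fin 2) ℤ) :
    Multiplicative ℤ →* MulAut (Multiplicative (Fin 2 → ℤ)) :=
  zpowersHom _ (AddEquiv.toMultiplicative (glAddEquiv A))

/-- The semidirect product `ℤ ⋉_A ℤ²`. -/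
def ZSemidirect (A : GL (Fin 2) ℤ) : Type :=
  SemidirectProduct (Multiplicative (Fin 2 → ℤ)) (Multiplicative ℤ) (glZAction A)

instance (A : GL (Fin 2) ℤ) : Group (ZSemidirect A) :=
  inferInstanceAs (Group (SemidirectProduct _ _ (glZAction A)))

namespace Stmt11

def a : FreeGroup (Fin 3) := FreeGroup.of 0
def b : FreeGroup (Fin 3) := FreeGroup.of 1
def c : FreeGroup (Fin 3) := FreeGroup.of 2

/-- relators; the first one is the commutator [b⁻¹, c] = b⁻¹ * c * b * c⁻¹ -/
def rels : Set (FreeGroup (Fin 3)) :=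
  {b⁻¹ * c * b * c⁻¹, a * c * a⁻¹ * b ^ 3 * (c ^ 2)⁻¹, a * b⁻¹ * a⁻¹ * b * c⁻¹}

open Multiplicative SemidirectProduct

section IntLattice

variable {G : Type*} [Group G] {x y : G}

def zpowersHom₂ (h : Commute x y) : Multiplicative (Fin 2 → ℤ) →* G where
  toFun v := x ^ toAdd v 0 * y ^ toAdd v 1
  map_one' := by simp
  map_mul' v w := by
    simp only [toAdd_mul, Pi.add_apply, _root_.zpow_add]
    rw [(h.symm.zpow_zpow (toAdd v 1) (toAdd w 0)).mul_mul_mul_comm]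

theorem zpowersHom₂_apply (h : Commute x y) (v : Fin 2 → ℤ) :
    zpowersHom₂ h (ofAdd v) = x ^ v 0 * y ^ v 1 := rfl

theorem eq_zpow_mul_zpow (v : Multiplicative (Fin 2 → ℤ)) :
    v = ofAdd ![1, 0] ^ toAdd v 0 * ofAdd ![0, 1] ^ toAdd v 1 := by
  rw [← ofAdd_zsmul, ← ofAdd_zsmul, ← ofAdd_add]
  ext i
  fin_cases i <;> simp

theorem hom_ext_fin_two {f g : Multiplicative (Fin 2 → ℤ) →* G}
    (h₀ : f (ofAdd ![1, 0]) = g (ofAdd ![1, 0])) (h₁ : f (ofAdd ![0, 1]) = g (ofAdd ![0, 1])) :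
    f = g := by
  refine MonoidHom.ext fun v => ?_
  rw [eq_zpow_mul_zpow v]
  simp only [map_mul, map_zpow, h₀, h₁]

end IntLattice

section IntSemidirect

variable {N G : Type*} [Group N] [Group G] {φ : Multiplicative ℤ →* MulAut N}

theorem comp_aut_eq_conj_comp {f : N →* G} {t : G}
    (hf : ∀ n, f (φ (ofAdd 1) n) = t * f n * t⁻¹) (g : Multiplicative ℤ) :
    f.comp (φ g).toMonoidHom = (MulAut.conj (zpowersHom G t g)).toMonoidHom.comp f := by
  have key : ∀ k : ℤ, ∀ n, f (φ (ofAdd k) n) = t ^ k * f n * (t ^ k)⁻¹ := by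
    intro k
    induction k using Int.induction_on with
    | zero => simp
    | succ k ih =>
      intro n
      rw [ofAdd_add, map_mul, MulAut.mul_apply, ih, hf, _root_.zpow_add_one]
      group
    | pred k ih =>
      intro n
      have h := hf (φ (ofAdd (-k - 1)) n)
      rw [← MulAut.mul_apply, ← map_mul, ← ofAdd_add, show 1 + (-k - 1) = -(k : ℤ) by ring,
        ih] at h
      rw [show f _ = t⁻¹ * (t * f (φ (ofAdd (-k - 1)) n) * t⁻¹) * t by group, ← h,
        _root_.zpow_sub_one]
      group
  ext n
  exact key (toAdd g) n

end IntSemidirect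

theorem glZAction_ofAdd_one_apply (A : GL (Fin 2) ℤ) (v : Fin 2 → ℤ) :
    glZAction A (ofAdd 1) (ofAdd v) = ofAdd ((A : Matrix (Fin 2) (Fin 2) ℤ) *ᵥ v) := by
  rw [glZAction, zpowersHom_apply, toAdd_ofAdd, _root_.zpow_one]
  rfl

section Presentation

def genA : PresentedGroup rels := PresentedGroup.of 0
def genB : PresentedGroup rels := PresentedGroup.of 1
def genC : PresentedGroup rels := PresentedGroup.of 2

theorem commute_genB_genC : Commute genB genC := by
  have h := PresentedGroup.one_of_mem (rels := rels) (x := b⁻¹ * c * b * c⁻¹) (by simp [rels])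
  change genB⁻¹ * genC * genB * genC⁻¹ = 1 at h
  rw [mul_inv_eq_one, mul_assoc, inv_mul_eq_iff_eq_mul] at h
  exact h.symm

theorem genA_conj_genB : genA * genB * genA⁻¹ = genB * genC⁻¹ := by
  have h := PresentedGroup.one_of_mem (rels := rels) (x := a * b⁻¹ * a⁻¹ * b * c⁻¹)
    (by simp [rels])
  change genA * genB⁻¹ * genA⁻¹ * genB * genC⁻¹ = 1 at h
  rw [mul_inv_eq_one, ← eq_mul_inv_iff_mul_eq] at h
  calc genA * genB * genA⁻¹ = (genA * genB⁻¹ * genA⁻¹)⁻¹ := by group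
    _ = genB * genC⁻¹ := by rw [h]; group

theorem genA_conj_genC : genA * genC * genA⁻¹ = genC ^ 2 * genB⁻¹ ^ 3 := by
  have h := PresentedGroup.one_of_mem (rels := rels) (x := a * c * a⁻¹ * b ^ 3 * (c ^ 2)⁻¹)
    (by simp [rels])
  change genA * genC * genA⁻¹ * genB ^ 3 * (genC ^ 2)⁻¹ = 1 at h
  rw [mul_inv_eq_one, ← eq_mul_inv_iff_mul_eq] at h
  rw [h, inv_pow]

theorem commute_genB_mul_genC_genB_inv : Commute (genB * genC) genB⁻¹ :=
  ((Commute.refl genB).mul_left commute_genB_genC.symm).inv_right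

theorem genA_conj_genB_mul_genC :
    genA * (genB * genC) * genA⁻¹ = genB * genC * genB⁻¹ ^ 3 := by
  rw [show genA * (genB * genC) * genA⁻¹ = (genA * genB * genA⁻¹) * (genA * genC * genA⁻¹) by
      group,
    genA_conj_genB, genA_conj_genC]
  group

theorem genA_conj_genB_inv :
    genA * genB⁻¹ * genA⁻¹ = genB * genC * genB⁻¹ ^ 2 := by
  rw [show genA * genB⁻¹ * genA⁻¹ = (genA * genB * genA⁻¹)⁻¹ by group, genA_conj_genB,
    commute_genB_genC.eq]
  group

def vecHom : Multiplicative (Fin 2 → ℤ) →* PresentedGroup rels :=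
  zpowersHom₂ commute_genB_mul_genC_genB_inv

theorem vecHom_glZAction {A : GL (Fin 2) ℤ}
    (hA : (A : Matrix (Fin 2) (Fin 2) ℤ) = !![1, 1; 3, 2]) (v : Multiplicative (Fin 2 → ℤ)) :
    vecHom (glZAction A (ofAdd 1) v) = genA * vecHom v * genA⁻¹ := by
  change (vecHom.comp (glZAction A (ofAdd 1)).toMonoidHom) v
    = ((MulAut.conj genA).toMonoidHom.comp vecHom) v
  congr 1
  refine hom_ext_fin_two ?_ ?_ <;>
    simp [glZAction_ofAdd_one_apply, hA, vecHom, zpowersHom₂_apply, genA_conj_genB_mul_genC,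
      genA_conj_genB_inv]

end Presentation

section Semidirect

variable {A : GL (Fin 2) ℤ}

def generatorImage (A : GL (Fin 2) ℤ) :
    Fin 3 → Multiplicative (Fin 2 → ℤ) ⋊[glZAction A] Multiplicative ℤ :=
  ![inr (ofAdd 1), inl (ofAdd ![0, -1]), inl (ofAdd ![1, 1])]

theorem inr_conj_inl (v : Fin 2 → ℤ) :
    (inr (ofAdd 1) * inl (ofAdd v) * (inr (ofAdd 1))⁻¹ :
      Multiplicative (Fin 2 → ℤ) ⋊[glZAction A] Multiplicative ℤ) =
      inl (ofAdd ((A : Matrix (Fin 2) (Fin 2) ℤ) *ᵥ v)) := by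
  rw [← map_inv, ← inl_aut, glZAction_ofAdd_one_apply]

theorem lift_generatorImage_rels (hA : (A : Matrix (Fin 2) (Fin 2) ℤ) = !![1, 1; 3, 2]) :
    ∀ r ∈ rels, FreeGroup.lift (generatorImage A) r = 1 := by
  simp only [rels, Set.mem_insert_iff, Set.mem_singleton_iff, forall_eq_or_imp, forall_eq]
  refine ⟨?_, ?_, ?_⟩ <;>
  · simp only [a, b, c, generatorImage, map_mul, map_inv, map_pow, FreeGroup.lift_apply_of,
      Matrix.cons_val_zero, Matrix.cons_val_one, Matrix.cons_val_two, Matrix.head_cons,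
      Matrix.tail_cons]
    simp only [← map_inv inl, ← ofAdd_neg, inr_conj_inl, ← map_pow inl, ← map_mul inl,
      map_eq_one_iff _ inl_injective, hA]
    decide

variable (hA : (A : Matrix (Fin 2) (Fin 2) ℤ) = !![1, 1; 3, 2])
include hA

def toSemidirect :
    PresentedGroup rels →* Multiplicative (Fin 2 → ℤ) ⋊[glZAction A] Multiplicative ℤ :=
  PresentedGroup.toGroup (lift_generatorImage_rels hA)

def ofSemidirect :
    Multiplicative (Fin 2 → ℤ) ⋊[glZAction A] Multiplicative ℤ →* PresentedGroup rels :=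
  lift vecHom (zpowersHom _ genA) (comp_aut_eq_conj_comp (vecHom_glZAction hA))

@[simp] theorem toSemidirect_genA : toSemidirect hA genA = inr (ofAdd 1) :=
  PresentedGroup.toGroup.of _

@[simp] theorem toSemidirect_genB : toSemidirect hA genB = inl (ofAdd ![0, -1]) :=
  PresentedGroup.toGroup.of _

@[simp] theorem toSemidirect_genC : toSemidirect hA genC = inl (ofAdd ![1, 1]) :=
  PresentedGroup.toGroup.of _

@[simp] theorem ofSemidirect_inl (v : Fin 2 → ℤ) :
    ofSemidirect hA (inl (ofAdd v)) = (genB * genC) ^ v 0 * genB⁻¹ ^ v 1 :=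
  lift_inl _ _ _ _

@[simp] theorem ofSemidirect_inr (n : ℤ) : ofSemidirect hA (inr (ofAdd n)) = genA ^ n :=
  lift_inr _ _ _ _

theorem ofSemidirect_comp_toSemidirect : (ofSemidirect hA).comp (toSemidirect hA) = .id _ := by
  refine PresentedGroup.ext fun i => ?_
  fin_cases i
  · change ofSemidirect hA (toSemidirect hA genA) = genA
    simp
  · change ofSemidirect hA (toSemidirect hA genB) = genB
    simp
  · change ofSemidirect hA (toSemidirect hA genC) = genC
    simp [commute_genB_genC.mul_inv_cancel]

theorem toSemidirect_comp_ofSemidirect : (toSemidirect hA).comp (ofSemidirect hA) = .id _ := by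
  refine hom_ext ?_ (MonoidHom.ext_mint ?_)
  · refine hom_ext_fin_two ?_ ?_
    · simp [← map_mul inl, ← ofAdd_add]
    · simp [← map_inv inl, ← ofAdd_neg]
  · simp

end Semidirect

/-- The presented group is isomorphic to the semidirect product given by
the matrix [[1,1],[3,2]]. -/
theorem presented_iso_semidirect (A : GL (Fin 2) ℤ)
    (hA : (A : Matrix (Fin 2) (Fin 2) ℤ) = !![1, 1; 3, 2]) :
    Nonempty (PresentedGroup rels ≃* ZSemidirect A) :=
  ⟨MonoidHom.toMulEquiv _ _ (ofSemidirect_comp_toSemidirect hA)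
    (toSemidirect_comp_ofSemidirect hA)⟩

end Stmt11
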